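/- In the two-player interconnected contest with Tullock contest success function with parameter γ ∈ (0,1], in every Nash equilibrium every battlefield receives positive effective effort from at least one player: for every k ∈ B, y_1^k + y_2^k > 0. -/

import Mathlib

open Finset Matrix

/-- Effective effort of a player with spillover matrix `ρ` and effort vector `e`
at battlefield `k`: `y^k = e^k + ∑_{l ≠ k} ρ^{l,k} e^l`. -/
noncomputable def effY {m : ℕ} (ρ : Matrix (Fin m) (Fin m) ℝ) (e : Fin m → ℝ)
    (k : Fin m) : ℝ :=
  e k + ∑ l ∈ Finset.univ.erase k, ρ l k * e l

/-- Tullock contest success function with parameter `γ`.  When both effective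
efforts are `0` this gives `0/0 = 0`, matching the convention. -/
noncomputable def tullock (γ y₁ y₂ : ℝ) : ℝ :=
  y₁ ^ γ / (y₁ ^ γ + y₂ ^ γ)

/-- Payoff of player `i` in the interconnected contest. -/
noncomputable def payoff {m : ℕ} (γ : ℝ) (v : Fin m → ℝ) (c : Fin 2 → ℝ)
    (ρ : Fin 2 → Matrix (Fin m) (Fin m) ℝ) (e : Fin 2 → Fin m → ℝ) (i : Fin 2) : ℝ :=
  (∑ k, v k * tullock γ (effY (ρ i) (e i) k) (effY (ρ (1 - i)) (e (1 - i)) k))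
    - c i * ∑ k, e i k

/-- Pure strategy Nash equilibrium of the interconnected contest:
nonnegative efforts, and no profitable deviation to any nonnegative effort vector. -/
def IsNashEq {m : ℕ} (γ : ℝ) (v : Fin m → ℝ) (c : Fin 2 → ℝ)
    (ρ : Fin 2 → Matrix (Fin m) (Fin m) ℝ) (e : Fin 2 → Fin m → ℝ) : Prop :=
  (∀ i k, 0 ≤ e i k) ∧
  ∀ (i : Fin 2) (e' : Fin m → ℝ), (∀ k, 0 ≤ e' k) →
    payoff γ v c ρ (Function.update e i e') i ≤ payoff γ v c ρ e i

/-- Winning probability of player `i` at battlefield `k` under profile `e`. -/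
noncomputable def eqProb {m : ℕ} (γ : ℝ) (ρ : Fin 2 → Matrix (Fin m) (Fin m) ℝ)
    (e : Fin 2 → Fin m → ℝ) (i : Fin 2) (k : Fin m) : ℝ :=
  tullock γ (effY (ρ i) (e i) k) (effY (ρ (1 - i)) (e (1 - i)) k)


/-! Suppose no player puts effective effort on battlefield `k`. Then player 1 can add a small
effort `ε` there: since `γ > 0` and `0/0 = 0`, its winning probability at `k` jumps from `0` to `1`,
and, spillovers being nonnegative, no other winning probability decreases. With
`ε = v^k / (2 c_1)` the deviation gains at least `v^k` for a cost of `v^k / 2`, so the profile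
is not an equilibrium. -/

section EffectiveEffort

variable {m : ℕ} {ρ : Matrix (Fin m) (Fin m) ℝ} {e e' : Fin m → ℝ}

lemma effY_nonneg (hρ : ∀ k l, 0 ≤ ρ k l) (he : ∀ k, 0 ≤ e k) (k : Fin m) :
    0 ≤ effY ρ e k :=
  add_nonneg (he k) (sum_nonneg fun l _ => mul_nonneg (hρ l k) (he l))

lemma le_effY (hρ : ∀ k l, 0 ≤ ρ k l) (he : ∀ k, 0 ≤ e k) (k : Fin m) : e k ≤ effY ρ e k :=
  le_add_of_nonneg_right (sum_nonneg fun l _ => mul_nonneg (hρ l k) (he l))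

lemma effY_mono (hρ : ∀ k l, 0 ≤ ρ k l) (h : e ≤ e') (k : Fin m) : effY ρ e k ≤ effY ρ e' k :=
  add_le_add (h k) (sum_le_sum fun l _ => mul_le_mul_of_nonneg_left (h l) (hρ l k))

end EffectiveEffort

section Tullock

variable {γ a a' b : ℝ}

lemma div_add_le_div_add {x x' y : ℝ} (hx : 0 ≤ x) (hxx : x ≤ x') (hy : 0 ≤ y) :
    x / (x + y) ≤ x' / (x' + y) := by
  rcases (add_nonneg hx hy).eq_or_lt with h | h
  · rw [← h, div_zero]
    exact div_nonneg (hx.trans hxx) (by linarith)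
  · rw [div_le_div_iff₀ h (by linarith)]
    nlinarith

lemma tullock_mono_left (hγ : 0 ≤ γ) (ha : 0 ≤ a) (hb : 0 ≤ b) (haa : a ≤ a') :
    tullock γ a b ≤ tullock γ a' b :=
  div_add_le_div_add (Real.rpow_nonneg ha γ) (Real.rpow_le_rpow ha haa hγ)
    (Real.rpow_nonneg hb γ)

lemma tullock_zero_zero (hγ : γ ≠ 0) : tullock γ 0 0 = 0 := by
  simp [tullock, Real.zero_rpow hγ]

lemma tullock_zero_right_of_pos (hγ : γ ≠ 0) (ha : 0 < a) : tullock γ a 0 = 1 := by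
  simp [tullock, Real.zero_rpow hγ, (Real.rpow_pos_of_pos ha γ).ne']

end Tullock

section Payoff

variable {m : ℕ} {γ : ℝ} {v : Fin m → ℝ} {c : Fin 2 → ℝ} {ρ : Fin 2 → Matrix (Fin m) (Fin m) ℝ}
  {e : Fin 2 → Fin m → ℝ}

lemma payoff_update_self (i : Fin 2) (e' : Fin m → ℝ) :
    payoff γ v c ρ (Function.update e i e') i =
      (∑ k, v k * tullock γ (effY (ρ i) e' k) (effY (ρ (1 - i)) (e (1 - i)) k))
        - c i * ∑ k, e' k := by
  have hne : 1 - i ≠ i := by fin_cases i <;> decide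
  rw [payoff, Function.update_self, Function.update_of_ne hne]

lemma payoff_lt_payoff_add_single (hγ : 0 < γ) (hv : ∀ k, 0 ≤ v k)
    (hρ : ∀ i k l, 0 ≤ ρ i k l) (he : ∀ i k, 0 ≤ e i k) (i : Fin 2) {k : Fin m}
    (hi : effY (ρ i) (e i) k = 0) (hj : effY (ρ (1 - i)) (e (1 - i)) k = 0)
    {ε : ℝ} (hε : 0 < ε) (hcε : c i * ε < v k) :
    payoff γ v c ρ e i < payoff γ v c ρ (Function.update e i (e i + Pi.single k ε)) i := by
  set e' := e i + Pi.single k ε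
  set y := fun j => effY (ρ (1 - i)) (e (1 - i)) j
  set gain := fun j => v j * tullock γ (effY (ρ i) e' j) (y j)
    - v j * tullock γ (effY (ρ i) (e i) j) (y j)
  have hle : e i ≤ e' := le_add_of_nonneg_right (Pi.single_nonneg.mpr hε.le)
  have he' : ∀ j, 0 ≤ e' j := fun j => (he i j).trans (hle j)
  have hy : ∀ j, 0 ≤ y j := effY_nonneg (hρ (1 - i)) (he (1 - i))
  have hgain_nonneg : ∀ j ∈ univ, 0 ≤ gain j := fun j _ =>
    sub_nonneg.mpr <| mul_le_mul_of_nonneg_left (tullock_mono_left hγ.le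
      (effY_nonneg (hρ i) (he i) j) (hy j) (effY_mono (hρ i) hle j)) (hv j)
  have hk_pos : 0 < effY (ρ i) e' k := calc
    0 < e i k + ε := by linarith [he i k]
    _ = e' k := by simp [e']
    _ ≤ effY (ρ i) e' k := le_effY (hρ i) he' k
  have hgain_k : gain k = v k := by
    simp only [gain, y, hi, hj, tullock_zero_zero hγ.ne', tullock_zero_right_of_pos hγ.ne' hk_pos]
    ring
  have hgain : v k ≤ ∑ j, gain j := hgain_k ▸ single_le_sum hgain_nonneg (mem_univ k)
  have hcost : ∑ j, e' j = ∑ j, e i j + ε := by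
    simp only [e', Pi.add_apply, sum_add_distrib, sum_pi_single', mem_univ, if_true]
  rw [payoff_update_self, payoff, hcost]
  simp only [gain, sum_sub_distrib] at hgain
  linarith

end Payoff

theorem every_battlefield_positive_effective_effort_general (m : ℕ) (γ : ℝ) (hγ0 : 0 < γ)
    (v : Fin m → ℝ) (hv : ∀ k, 0 < v k)
    (c : Fin 2 → ℝ) (hc : ∀ i, 0 < c i)
    (ρ : Fin 2 → Matrix (Fin m) (Fin m) ℝ)
    (hρ : ∀ i k l, 0 ≤ ρ i k l)
    (e : Fin 2 → Fin m → ℝ) (he : IsNashEq γ v c ρ e) (k : Fin m) :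
    0 < effY (ρ 0) (e 0) k + effY (ρ 1) (e 1) k := by
  obtain ⟨he_nonneg, hno_dev⟩ := he
  have hy : ∀ i, 0 ≤ effY (ρ i) (e i) k := fun i => effY_nonneg (hρ i) (he_nonneg i) k
  by_contra! hzero
  have h0 : effY (ρ 0) (e 0) k = 0 := by linarith [hy 0, hy 1]
  have h1 : effY (ρ (1 - 0)) (e (1 - 0)) k = 0 := by simp only [sub_zero]; linarith [hy 0, hy 1]
  set ε := v k / (2 * c 0) with hε_def
  have hε : 0 < ε := div_pos (hv k) (by linarith [hc 0])
  have hcε : c 0 * ε < v k := calc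
    c 0 * ε = v k / 2 := by rw [hε_def]; field_simp [(hc 0).ne']
    _ < v k := half_lt_self (hv k)
  have hdev_nonneg : 0 ≤ e 0 + Pi.single k ε :=
    add_nonneg (he_nonneg 0) (Pi.single_nonneg.mpr hε.le)
  exact (hno_dev 0 _ fun j => hdev_nonneg j).not_gt <|
    payoff_lt_payoff_add_single hγ0 (fun j => (hv j).le) hρ he_nonneg 0 h0 h1 hε hcε

/-- in every equilibrium every battlefield receives positive
effective effort from at least one player. -/
theorem every_battlefield_positive_effective_effort (m : ℕ) (γ : ℝ) (hγ0 : 0 < γ) (hγ1 : γ ≤ 1)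
    (v : Fin m → ℝ) (hv : ∀ k, 0 < v k)
    (c : Fin 2 → ℝ) (hc : ∀ i, 0 < c i)
    (ρ : Fin 2 → Matrix (Fin m) (Fin m) ℝ)
    (hρ : ∀ i k l, 0 ≤ ρ i k l) (hρd : ∀ i k, ρ i k k = 0)
    (e : Fin 2 → Fin m → ℝ) (he : IsNashEq γ v c ρ e) (k : Fin m) :
    0 < effY (ρ 0) (e 0) k + effY (ρ 1) (e 1) k :=
  every_battlefield_positive_effective_effort_general m γ hγ0 v hv c hc ρ hρ e he k
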